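/- arXiv:1507.05703 — 2 statements merged into one kernel-verified Lean document; each statement's English description precedes it below -/
import Mathlib

section
/- Let A = diag(A₁, 0_{q+r}) where A₁ is a p×p nonsingular diagonal matrix, and let B = [[𝓑₁, 0, 𝓑₂],[0, 𝓑₃, 0],[𝓑₂ᵀ, 0, 0]] where 𝓑₁ is p×p symmetric, 𝓑₃ is a q×q nonsingular diagonal matrix and 𝓑₂ is p×r. Then A and B are simultaneously diagonalizable via congruence if and only if A₁⁻¹𝓑₁ is diagonalizable over ℝ and 𝓑₂ = 0 (or r = 0). -/
/-!
If `Pᵀ A P = diag a` and `Pᵀ B P = diag b` with `P` invertible, then `aᵢ B pᵢ = bᵢ A pᵢ` for every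
column `pᵢ` of `P`, and `B` sends `ker A` to a space meeting `range A` only in `0`. For
`x = (0, 0, z)` we have `A x = 0` and `B x = (𝓑₂ z, 0, 0) ∈ range A`, which forces `𝓑₂ = 0`.
Since `rank A = p`, at least `p` of the `aᵢ` are nonzero; the first blocks of the corresponding
columns are eigenvectors of `A₁⁻¹ 𝓑₁`, and they form an invertible matrix because their
`A₁`-Gram matrix is diagonal with nonzero entries.

Conversely, if `Q⁻¹ A₁⁻¹ 𝓑₁ Q = D`, then `M = Qᵀ A₁ Q` and `Qᵀ 𝓑₁ Q = M D` are symmetric, so `M`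
commutes with `D` and hence with `M D`. An orthonormal basis of common eigenvectors of these two
commuting symmetric matrices diagonalizes both by congruence.
-/

open Matrix Module.End

namespace Matrix

variable {m n o K : Type*} [Fintype m] [Fintype n] [Fintype o]

theorem IsSymm.transpose_mul_mul {R : Type*} [CommSemiring R] {A : Matrix n n R} (hA : A.IsSymm)
    (Q : Matrix n n R) : (Qᵀ * A * Q).IsSymm := by
  simp only [IsSymm, transpose_mul, transpose_transpose, hA.eq, Matrix.mul_assoc]

variable [DecidableEq m] [DecidableEq n] [DecidableEq o] [Field K]

-- simultaneously diagonalizable via congruence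
def IsSDC (A B : Matrix n n K) : Prop :=
  ∃ P : Matrix n n K, IsUnit P ∧ (Pᵀ * A * P).IsDiag ∧ (Pᵀ * B * P).IsDiag

def IsDiagonalizable (M : Matrix n n K) : Prop :=
  ∃ Q D : Matrix n n K, IsUnit Q ∧ D.IsDiag ∧ Q⁻¹ * M * Q = D

theorem IsSDC.exists_diagonal {A B : Matrix n n K} (h : IsSDC A B) :
    ∃ (P : Matrix n n K) (a b : n → K),
      IsUnit P ∧ Pᵀ * A * P = diagonal a ∧ Pᵀ * B * P = diagonal b := by
  obtain ⟨P, hP, hA, hB⟩ := h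
  exact ⟨P, _, _, hP, hA.diagonal_diag.symm, hB.diagonal_diag.symm⟩

theorem isSDC_of_isDiag {A B : Matrix n n K} (hA : A.IsDiag) (hB : B.IsDiag) : IsSDC A B :=
  ⟨1, isUnit_one, by simpa using hA, by simpa using hB⟩

theorem IsSDC.of_congr {A B Q : Matrix n n K} (hQ : IsUnit Q)
    (h : IsSDC (Qᵀ * A * Q) (Qᵀ * B * Q)) : IsSDC A B := by
  obtain ⟨P, hP, hA, hB⟩ := h
  refine ⟨Q * P, hQ.mul hP, ?_, ?_⟩
  · simpa only [transpose_mul, Matrix.mul_assoc] using hA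
  · simpa only [transpose_mul, Matrix.mul_assoc] using hB

theorem mul_mul_diagonal_eq_of_congr_eq_diagonal {A B P : Matrix n n K} {a b : n → K}
    (hP : IsUnit P) (ha : Pᵀ * A * P = diagonal a) (hb : Pᵀ * B * P = diagonal b) :
    B * P * diagonal a = A * P * diagonal b := by
  refine ((isUnit_transpose P).mpr hP).mul_left_cancel ?_
  simp only [← Matrix.mul_assoc, ha, hb, diagonal_mul_diagonal, mul_comm]

theorem IsSDC.mulVec_eq_zero_of_mulVec_eq_zero {A B : Matrix n n K} (h : IsSDC A B)
    {x w : n → K} (hx : A *ᵥ x = 0) (hw : B *ᵥ x = A *ᵥ w) : B *ᵥ x = 0 := by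
  obtain ⟨P, a, b, hP, ha, hb⟩ := h.exists_diagonal
  obtain ⟨c, rfl⟩ := mulVec_surjective_iff_isUnit.mpr hP x
  obtain ⟨c', rfl⟩ := mulVec_surjective_iff_isUnit.mpr hP w
  have hcoord {X : Matrix n n K} {d : n → K} (hd : Pᵀ * X * P = diagonal d) (v : n → K) :
      Pᵀ *ᵥ (X *ᵥ (P *ᵥ v)) = d * v := by
    rw [mulVec_mulVec, mulVec_mulVec, hd]
    exact funext (mulVec_diagonal d v)
  have hac : a * c = 0 := by rw [← hcoord ha, hx, mulVec_zero]
  have hbc : b * c = a * c' := by rw [← hcoord ha, ← hcoord hb, hw]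
  have hbc0 : b * c = 0 := funext fun i => by
    by_cases hai : a i = 0
    · simpa [hai] using congrFun hbc i
    · simp [(mul_eq_zero.mp (congrFun hac i)).resolve_left hai]
  apply mulVec_injective_iff_isUnit.mpr ((isUnit_transpose P).mpr hP)
  rw [hcoord hb, hbc0, mulVec_zero]

theorem IsSDC.mulVec_eq_zero_of_fromBlocks {A₁ B₁ : Matrix m m K} {E : Matrix m o K}
    {F : Matrix o m K} {C : Matrix o o K} (h : IsSDC (fromBlocks A₁ 0 0 0) (fromBlocks B₁ E F C))
    (hA₁ : IsUnit A₁) {z : o → K} (hz : C *ᵥ z = 0) : E *ᵥ z = 0 := by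
  have hA₁' := (isUnit_iff_isUnit_det A₁).mp hA₁
  have := h.mulVec_eq_zero_of_mulVec_eq_zero (x := Sum.elim 0 z)
    (w := Sum.elim (A₁⁻¹ *ᵥ (E *ᵥ z)) 0) (by simp [fromBlocks_mulVec])
    (by simp [fromBlocks_mulVec, hz, mulVec_mulVec, mul_nonsing_inv_cancel_left A₁ E hA₁'])
  exact funext fun i => by simpa [fromBlocks_mulVec, hz] using congrFun this (Sum.inl i)

theorem isDiagonalizable_inv_mul_of_mul_diagonal {A B Q : Matrix n n K} {a b : n → K}
    (hA : IsUnit A) (ha : Qᵀ * A * Q = diagonal a) (ha0 : ∀ i, a i ≠ 0)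
    (hQ : B * Q * diagonal a = A * Q * diagonal b) : IsDiagonalizable (A⁻¹ * B) := by
  have hQu : IsUnit Q.det := by
    have : IsUnit (Qᵀ * A * Q).det := by
      rw [ha, det_diagonal]
      exact (Finset.prod_ne_zero_iff.mpr fun i _ => ha0 i).isUnit
    rw [det_mul] at this
    exact isUnit_of_mul_isUnit_right this
  have hBQ : B * Q = A * (Q * diagonal fun i => b i / a i) := by
    calc B * Q = B * Q * diagonal a * diagonal a⁻¹ := by
          rw [Matrix.mul_assoc _ (diagonal a), diagonal_mul_diagonal]
          simp [mul_inv_cancel₀ (ha0 _)]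
      _ = A * (Q * diagonal fun i => b i / a i) := by
          rw [hQ, Matrix.mul_assoc _ (diagonal b), diagonal_mul_diagonal, Matrix.mul_assoc]
          simp [div_eq_mul_inv]
  refine ⟨Q, diagonal fun i => b i / a i, (isUnit_iff_isUnit_det Q).mpr hQu, isDiag_diagonal _, ?_⟩
  rw [Matrix.mul_assoc, Matrix.mul_assoc, hBQ,
    nonsing_inv_mul_cancel_left A _ ((isUnit_iff_isUnit_det A).mp hA),
    nonsing_inv_mul_cancel_left Q _ hQu]

theorem IsSDC.isDiagonalizable_inv_mul_of_fromBlocks {A₁ B₁ : Matrix m m K} {C : Matrix o o K}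
    (h : IsSDC (fromBlocks A₁ 0 0 0) (fromBlocks B₁ 0 0 C)) (hA₁ : IsUnit A₁) :
    IsDiagonalizable (A₁⁻¹ * B₁) := by
  classical
  obtain ⟨P, a, b, hP, ha, hb⟩ := h.exists_diagonal
  have hcard : Fintype.card m ≤ Fintype.card {i // a i ≠ 0} :=
    calc Fintype.card m = A₁.rank := (rank_of_isUnit A₁ hA₁).symm
      _ ≤ (fromBlocks A₁ 0 0 0 : Matrix (m ⊕ o) (m ⊕ o) K).rank :=
          rank_submatrix_le (fromBlocks A₁ (0 : Matrix m o K) 0 0) Sum.inl Sum.inl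
      _ = (diagonal a).rank := by
          rw [← ha, rank_mul_eq_left_of_isUnit_det _ _ ((isUnit_iff_isUnit_det P).mp hP),
            rank_mul_eq_right_of_isUnit_det _ _ (by simpa [isUnit_iff_isUnit_det] using hP)]
      _ = _ := rank_diagonal a
  obtain ⟨f⟩ := Function.Embedding.nonempty_of_card_le hcard
  let g : m → m ⊕ o := fun k => (f k).1
  have hg : Function.Injective g := Subtype.val_injective.comp f.injective
  refine isDiagonalizable_inv_mul_of_mul_diagonal hA₁ (Q := P.submatrix Sum.inl g)
    (a := a ∘ g) (b := b ∘ g) ?_ (fun k => (f k).2) ?_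
  · have hsel := congrArg (fun X => X.submatrix g g) ha
    simp only [submatrix_diagonal _ _ hg] at hsel
    rw [← hsel]
    ext k l
    simp [mul_apply, Fintype.sum_sum_type]
  · have hcols := mul_mul_diagonal_eq_of_congr_eq_diagonal hP ha hb
    ext k l
    have hkl := congrFun (congrFun hcols (Sum.inl k)) (g l)
    simp only [mul_diagonal] at hkl ⊢
    simpa [mul_apply, Fintype.sum_sum_type] using hkl

theorem mul_eq_mul_diagonal_iff {R : Type*} [CommSemiring R] (M P : Matrix n n R) (μ : n → R) :
    M * P = P * diagonal μ ↔ ∀ j, M *ᵥ P.col j = μ j • P.col j := by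
  rw [← ext_iff, forall_comm]
  simp only [mul_diagonal]
  simp only [funext_iff, mul_apply, mulVec, dotProduct, col_apply, Pi.smul_apply,
    smul_eq_mul, mul_comm (μ _)]

theorem exists_orthogonal_joint_eigenbasis_of_commute {M N : Matrix n n ℝ}
    (hM : M.IsSymm) (hN : N.IsSymm) (hMN : Commute M N) :
    ∃ (R : Matrix n n ℝ) (μ ν : n → ℝ),
      Rᵀ * R = 1 ∧ M * R = R * diagonal μ ∧ N * R = R * diagonal ν := by
  classical
  have hsymm {X : Matrix n n ℝ} (hX : X.IsSymm) : (toEuclideanLin X).IsSymmetric :=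
    isSymmetric_toEuclideanLin_iff.mpr <| by
      rw [IsHermitian, conjTranspose_eq_transpose_of_trivial]; exact hX.eq
  have hcomm : Commute (toEuclideanLin M) (toEuclideanLin N) := by
    simpa [Commute, SemiconjBy, Module.End.mul_eq_comp] using congrArg toEuclideanLin hMN.eq
  let V : ℝ × ℝ → Submodule ℝ (EuclideanSpace ℝ n) := fun i =>
    eigenspace (toEuclideanLin M) i.2 ⊓ eigenspace (toEuclideanLin N) i.1
  have hV : DirectSum.IsInternal V := (hsymm hM).directSum_isInternal_of_commute (hsymm hN) hcomm
  -- only finitely many joint eigenspaces are nonzero, and orthonormal bases need a finite index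
  let _ := hV.submodule_iSupIndep.fintypeNeBotOfFiniteDimensional
  have hV' := DirectSum.isInternal_ne_bot_iff.mpr hV
  have hO := ((hsymm hM).orthogonalFamily_eigenspace_inf_eigenspace (hsymm hN)).comp
    (Subtype.val_injective (p := fun i => V i ≠ ⊥))
  have hn : Module.finrank ℝ (EuclideanSpace ℝ n) = Fintype.card n := finrank_euclideanSpace
  let e : Fin (Fintype.card n) ≃ n := Fintype.equivOfCardEq (Fintype.card_fin _)
  let b := (hV'.subordinateOrthonormalBasis hn hO).reindex e
  let idx : n → ℝ × ℝ := fun j => (hV'.subordinateOrthonormalBasisIndex hn (e.symm j) hO).1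
  have hb (j : n) : b j ∈ V (idx j) := by
    simpa [b] using hV'.subordinateOrthonormalBasis_subordinate hn (e.symm j) hO
  let R := (EuclideanSpace.basisFun n ℝ).toBasis.toMatrix b.toBasis
  have hcol (j : n) : R.col j = b j := by ext i; simp [R, Module.Basis.toMatrix_apply]
  have hR {X : Matrix n n ℝ} {μ : ℝ} {j : n} (h : b j ∈ eigenspace (toEuclideanLin X) μ) :
      X *ᵥ R.col j = μ • R.col j := by
    simpa [hcol, toLpLin_apply] using congrArg WithLp.ofLp (mem_eigenspace_iff.mp h)
  refine ⟨R, fun j => (idx j).2, fun j => (idx j).1, ?_, ?_, ?_⟩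
  · simpa [R, conjTranspose_eq_transpose_of_trivial] using
      (EuclideanSpace.basisFun n ℝ).toMatrix_orthonormalBasis_conjTranspose_mul_self b
  · exact (mul_eq_mul_diagonal_iff _ _ _).mpr fun j => hR (hb j).1
  · exact (mul_eq_mul_diagonal_iff _ _ _).mpr fun j => hR (hb j).2

theorem isSDC_of_isSymm_of_commute {M N : Matrix n n ℝ} (hM : M.IsSymm) (hN : N.IsSymm)
    (hMN : Commute M N) : IsSDC M N := by
  obtain ⟨R, μ, ν, hR, hMR, hNR⟩ := exists_orthogonal_joint_eigenbasis_of_commute hM hN hMN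
  refine ⟨R, (isUnit_iff_isUnit_det R).mpr (isUnit_det_of_left_inverse hR), ?_, ?_⟩
  · rw [Matrix.mul_assoc, hMR, ← Matrix.mul_assoc, hR, Matrix.one_mul]
    exact isDiag_diagonal μ
  · rw [Matrix.mul_assoc, hNR, ← Matrix.mul_assoc, hR, Matrix.one_mul]
    exact isDiag_diagonal ν

theorem IsDiagonalizable.isSDC {A B : Matrix n n ℝ} (hA : A.IsSymm) (hAu : IsUnit A)
    (hB : B.IsSymm) (h : IsDiagonalizable (A⁻¹ * B)) : IsSDC A B := by
  obtain ⟨Q, D, hQ, hD, hQD⟩ := h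
  have hN : Qᵀ * B * Q = Qᵀ * A * Q * D := by
    rw [← hQD]
    simp only [Matrix.mul_assoc, mul_nonsing_inv_cancel_left Q _ ((isUnit_iff_isUnit_det Q).mp hQ),
      mul_nonsing_inv_cancel_left A _ ((isUnit_iff_isUnit_det A).mp hAu)]
  have hMD : Commute (Qᵀ * A * Q) D := by
    have hN' := congrArg transpose hN
    rw [(hB.transpose_mul_mul Q).eq, transpose_mul, hD.isSymm.eq,
      (hA.transpose_mul_mul Q).eq] at hN'
    exact hN.symm.trans hN'
  refine IsSDC.of_congr hQ (isSDC_of_isSymm_of_commute (hA.transpose_mul_mul Q)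
    (hB.transpose_mul_mul Q) ?_)
  rw [hN]
  exact (Commute.refl _).mul_right hMD

theorem IsSDC.fromBlocks {A₁ B₁ : Matrix m m K} {A₂ B₂ : Matrix o o K}
    (h₁ : IsSDC A₁ B₁) (h₂ : IsSDC A₂ B₂) :
    IsSDC (fromBlocks A₁ 0 0 A₂) (fromBlocks B₁ 0 0 B₂) := by
  obtain ⟨P₁, hP₁, hA₁, hB₁⟩ := h₁
  obtain ⟨P₂, hP₂, hA₂, hB₂⟩ := h₂
  refine ⟨Matrix.fromBlocks P₁ 0 0 P₂, ?_, ?_, ?_⟩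
  · rw [isUnit_iff_isUnit_det, det_fromBlocks_zero₂₁]
    exact ((isUnit_iff_isUnit_det _).mp hP₁).mul ((isUnit_iff_isUnit_det _).mp hP₂)
  · simpa [fromBlocks_transpose, fromBlocks_multiply] using hA₁.fromBlocks hA₂
  · simpa [fromBlocks_transpose, fromBlocks_multiply] using hB₁.fromBlocks hB₂

end Matrix

theorem stmt_6_general (p q r : ℕ)
    (A₁ : Matrix (Fin p) (Fin p) ℝ) (hA₁d : A₁.IsDiag) (hA₁ : IsUnit A₁)
    (B₁ : Matrix (Fin p) (Fin p) ℝ) (hB₁s : B₁.IsSymm)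
    (B₂ : Matrix (Fin p) (Fin r) ℝ)
    (B₃ : Matrix (Fin q) (Fin q) ℝ) (hB₃d : B₃.IsDiag)
    (A B : Matrix (Fin p ⊕ (Fin q ⊕ Fin r)) (Fin p ⊕ (Fin q ⊕ Fin r)) ℝ)
    (hA : A = fromBlocks A₁ 0 0 0)
    (hB : B = fromBlocks B₁ (fromCols 0 B₂) (fromRows 0 B₂ᵀ)
        (fromBlocks B₃ 0 0 0)) :
    (∃ P : Matrix (Fin p ⊕ (Fin q ⊕ Fin r)) (Fin p ⊕ (Fin q ⊕ Fin r)) ℝ,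
        IsUnit P ∧ (Pᵀ * A * P).IsDiag ∧ (Pᵀ * B * P).IsDiag) ↔
      ((∃ (Q D : Matrix (Fin p) (Fin p) ℝ), IsUnit Q ∧ D.IsDiag ∧
          Q⁻¹ * (A₁⁻¹ * B₁) * Q = D) ∧ (B₂ = 0 ∨ r = 0)) := by
  subst hA hB
  change IsSDC _ _ ↔ IsDiagonalizable (A₁⁻¹ * B₁) ∧ _
  constructor
  · intro h
    have hB₂ : B₂ = 0 := by
      ext i j
      have := h.mulVec_eq_zero_of_fromBlocks hA₁ (z := Sum.elim 0 (Pi.single j 1))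
        (by ext (k | k) <;> simp)
      simpa using congrFun this i
    subst hB₂
    exact ⟨IsSDC.isDiagonalizable_inv_mul_of_fromBlocks (by simpa using h) hA₁, Or.inl rfl⟩
  · rintro ⟨hdiag, hB₂⟩
    obtain rfl : B₂ = 0 := hB₂.elim id fun hr => by subst hr; exact Subsingleton.elim _ _
    simpa using (hdiag.isSDC hA₁d.isSymm hA₁ hB₁s).fromBlocks
      (isSDC_of_isDiag isDiag_zero (hB₃d.fromBlocks isDiag_zero))

theorem stmt_6 (p q r : ℕ)
    (A₁ : Matrix (Fin p) (Fin p) ℝ) (hA₁d : A₁.IsDiag) (hA₁ : IsUnit A₁)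
    (B₁ : Matrix (Fin p) (Fin p) ℝ) (hB₁s : B₁.IsSymm)
    (B₂ : Matrix (Fin p) (Fin r) ℝ)
    (B₃ : Matrix (Fin q) (Fin q) ℝ) (hB₃d : B₃.IsDiag) (hB₃ : IsUnit B₃)
    (A B : Matrix (Fin p ⊕ (Fin q ⊕ Fin r)) (Fin p ⊕ (Fin q ⊕ Fin r)) ℝ)
    (hA : A = fromBlocks A₁ 0 0 0)
    (hB : B = fromBlocks B₁ (fromCols 0 B₂) (fromRows 0 B₂ᵀ)
        (fromBlocks B₃ 0 0 0)) :
    (∃ P : Matrix (Fin p ⊕ (Fin q ⊕ Fin r)) (Fin p ⊕ (Fin q ⊕ Fin r)) ℝ,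
        IsUnit P ∧ (Pᵀ * A * P).IsDiag ∧ (Pᵀ * B * P).IsDiag) ↔
      ((∃ (Q D : Matrix (Fin p) (Fin p) ℝ), IsUnit Q ∧ D.IsDiag ∧
          Q⁻¹ * (A₁⁻¹ * B₁) * Q = D) ∧ (B₂ = 0 ∨ r = 0)) :=
  stmt_6_general p q r A₁ hA₁d hA₁ B₁ hB₁s B₂ B₃ hB₃d A B hA hB
end

section
/- Let A and B be real symmetric n×n matrices and I the n×n identity. Then A, B, and I are simultaneously diagonalizable via congruence if and only if AB = BA. -/
/-!
If `PᵀAP = D`, `PᵀBP = E` and `PᵀP = F` are diagonal with `P` invertible, then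
`Pᵀ (A B) P = D F⁻¹ E`, which is symmetric in `D` and `E` because diagonal matrices commute;
cancelling `Pᵀ` and `P` gives `AB = BA`. Conversely, commuting symmetric operators split the
space into an orthogonal direct sum of joint eigenspaces, and an orthonormal basis subordinate to
that splitting is the set of columns of an orthogonal `P` with `PᵀAP`, `PᵀBP` diagonal and
`PᵀP = 1`.
-/

open Matrix Module.End

namespace Matrix

section IsDiag

variable {n R : Type*} [Fintype n]

theorem IsDiag.mul [NonUnitalNonAssocSemiring R] {D E : Matrix n n R} (hD : D.IsDiag)
    (hE : E.IsDiag) : (D * E).IsDiag := by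
  classical
  rw [← hD.diagonal_diag, ← hE.diagonal_diag, diagonal_mul_diagonal]
  exact isDiag_diagonal _

theorem IsDiag.commute [CommSemiring R] {D E : Matrix n n R} (hD : D.IsDiag)
    (hE : E.IsDiag) : Commute D E := by
  classical
  rw [← hD.diagonal_diag, ← hE.diagonal_diag, Commute, SemiconjBy, diagonal_mul_diagonal,
    diagonal_mul_diagonal]
  simp only [mul_comm]

theorem IsDiag.inv [DecidableEq n] [CommRing R] {D : Matrix n n R} (hD : D.IsDiag) :
    D⁻¹.IsDiag := by
  rw [← hD.diagonal_diag, inv_diagonal]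
  exact isDiag_diagonal _

theorem commute_of_isDiag_congruence [DecidableEq n] [CommRing R] {A B P : Matrix n n R}
    (hP : IsUnit P) (hA : (Pᵀ * A * P).IsDiag) (hB : (Pᵀ * B * P).IsDiag)
    (hPP : (Pᵀ * P).IsDiag) : Commute A B := by
  have hPt : IsUnit Pᵀ := (isUnit_transpose P).mpr hP
  have congruence_mul (X Y : Matrix n n R) :
      Pᵀ * X * P * (Pᵀ * P)⁻¹ * (Pᵀ * Y * P) = Pᵀ * (X * Y) * P := by
    rw [mul_inv_rev]
    simp only [Matrix.mul_assoc, mul_nonsing_inv_cancel_left _ _ ((isUnit_iff_isUnit_det _).mp hP),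
      nonsing_inv_mul_cancel_left _ _ ((isUnit_iff_isUnit_det _).mp hPt)]
  have : Pᵀ * (A * B) * P = Pᵀ * (B * A) * P := by
    rw [← congruence_mul, ← congruence_mul, ((hA.mul hPP.inv).commute hB).eq,
      (hA.commute hPP.inv).eq, ← Matrix.mul_assoc (Pᵀ * B * P)]
  exact hPt.mul_left_cancel (hP.mul_right_cancel this)

end IsDiag

end Matrix

namespace LinearMap.IsSymmetric

variable {𝕜 E ι : Type*} [RCLike 𝕜] [NormedAddCommGroup E] [InnerProductSpace 𝕜 E]
  [FiniteDimensional 𝕜 E] [Fintype ι] {T S : E →ₗ[𝕜] E}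

theorem exists_orthonormalBasis_eigenvectors_of_commute (hT : T.IsSymmetric)
    (hS : S.IsSymmetric) (hTS : Commute T S) (hι : Module.finrank 𝕜 E = Fintype.card ι) :
    ∃ (b : OrthonormalBasis ι 𝕜 E) (μ ν : ι → 𝕜),
      ∀ i, T (b i) = μ i • b i ∧ S (b i) = ν i • b i := by
  classical
  let V (p : 𝕜 × 𝕜) := eigenspace T p.2 ⊓ eigenspace S p.1
  have hV₀ : DirectSum.IsInternal V := directSum_isInternal_of_commute hT hS hTS
  -- Only finitely many joint eigenspaces are nonzero; the subordinate basis needs a finite index.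
  have : Fintype {p // V p ≠ ⊥} := hV₀.submodule_iSupIndep.fintypeNeBotOfFiniteDimensional
  have hV : DirectSum.IsInternal fun p : {p // V p ≠ ⊥} => V p :=
    DirectSum.isInternal_ne_bot_iff.mpr hV₀
  have hV' : OrthogonalFamily 𝕜 (fun p : {p // V p ≠ ⊥} => V p) fun p => (V p).subtypeₗᵢ :=
    (orthogonalFamily_eigenspace_inf_eigenspace hT hS).comp Subtype.val_injective
  let e := Fintype.equivFin ι
  let p (i : ι) : 𝕜 × 𝕜 := (hV.subordinateOrthonormalBasisIndex hι (e i) hV').1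
  refine ⟨(hV.subordinateOrthonormalBasis hι hV').reindex e.symm, fun i => (p i).2,
    fun i => (p i).1, fun i => ?_⟩
  have hmem := hV.subordinateOrthonormalBasis_subordinate hι (e i) hV'
  simp only [OrthonormalBasis.reindex_apply, Equiv.symm_symm]
  exact ⟨mem_eigenspace_iff.mp hmem.1, mem_eigenspace_iff.mp hmem.2⟩

end LinearMap.IsSymmetric

namespace Matrix

variable {𝕜 n : Type*} [RCLike 𝕜] [Fintype n] [DecidableEq n]

theorem mul_toMatrix_eq_toMatrix_mul_diagonal {M : Matrix n n 𝕜}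
    {b : OrthonormalBasis n 𝕜 (EuclideanSpace 𝕜 n)} {c : n → 𝕜}
    (h : ∀ j, toEuclideanLin M (b j) = c j • b j) :
    M * (EuclideanSpace.basisFun n 𝕜).toBasis.toMatrix b.toBasis =
      (EuclideanSpace.basisFun n 𝕜).toBasis.toMatrix b.toBasis * diagonal c := by
  ext i j
  have := congr($(h j) i)
  rw [mul_diagonal]
  simpa [toLpLin_apply, mulVec, dotProduct, Module.Basis.toMatrix_apply, mul_apply, mul_comm]
    using this

theorem IsHermitian.exists_unitary_isDiag_of_commute {A B : Matrix n n 𝕜} (hA : A.IsHermitian)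
    (hB : B.IsHermitian) (hAB : Commute A B) :
    ∃ U ∈ unitaryGroup n 𝕜, (star U * A * U).IsDiag ∧ (star U * B * U).IsDiag := by
  have hAB' : Commute (toEuclideanLin A) (toEuclideanLin B) := by
    simp only [Commute, SemiconjBy, Module.End.mul_eq_comp, ← toLpLin_mul_same, hAB.eq]
  obtain ⟨b, μ, ν, hb⟩ := LinearMap.IsSymmetric.exists_orthonormalBasis_eigenvectors_of_commute
    (isSymmetric_toEuclideanLin_iff.mpr hA) (isSymmetric_toEuclideanLin_iff.mpr hB) hAB'
    finrank_euclideanSpace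
  set U := (EuclideanSpace.basisFun n 𝕜).toBasis.toMatrix b.toBasis
  have hU : U ∈ unitaryGroup n 𝕜 :=
    (EuclideanSpace.basisFun n 𝕜).toMatrix_orthonormalBasis_mem_unitary b
  have isDiag_of_mul_eq {M : Matrix n n 𝕜} {c : n → 𝕜} (h : M * U = U * diagonal c) :
      (star U * M * U).IsDiag := by
    rw [Matrix.mul_assoc, h, ← Matrix.mul_assoc, Unitary.star_mul_self_of_mem hU, Matrix.one_mul]
    exact isDiag_diagonal c
  exact ⟨U, hU, isDiag_of_mul_eq (mul_toMatrix_eq_toMatrix_mul_diagonal fun j => (hb j).1),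
    isDiag_of_mul_eq (mul_toMatrix_eq_toMatrix_mul_diagonal fun j => (hb j).2)⟩

end Matrix

theorem stmt_8 (n : ℕ) (A B : Matrix (Fin n) (Fin n) ℝ)
    (hA : A.IsSymm) (hB : B.IsSymm) :
    (∃ P : Matrix (Fin n) (Fin n) ℝ, IsUnit P ∧
        (Pᵀ * A * P).IsDiag ∧ (Pᵀ * B * P).IsDiag ∧
        (Pᵀ * (1 : Matrix (Fin n) (Fin n) ℝ) * P).IsDiag) ↔
      A * B = B * A := by
  constructor
  · rintro ⟨P, hP, hAP, hBP, hPP⟩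
    rw [Matrix.mul_one] at hPP
    exact (commute_of_isDiag_congruence hP hAP hBP hPP).eq
  · intro hAB
    obtain ⟨U, hU, hAU, hBU⟩ := (isHermitian_iff_isSymm.mpr hA).exists_unitary_isDiag_of_commute
      (isHermitian_iff_isSymm.mpr hB) hAB
    have star_eq : star U = Uᵀ := by
      rw [star_eq_conjTranspose, conjTranspose_eq_transpose_of_trivial]
    rw [star_eq] at hAU hBU
    refine ⟨U, Unitary.isUnit_coe (U := ⟨U, hU⟩), hAU, hBU, ?_⟩
    rw [Matrix.mul_one, ← star_eq, Unitary.star_mul_self_of_mem hU]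
    exact isDiag_one
end
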